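/- arXiv:2410.00601 — 5 statements merged into one kernel-verified Lean document; each statement's English description precedes it below -/
import Mathlib

section
/- For every finite undirected graph G there exists a valid (proper) colouring c of G such that loc(G,c) = γ(G), the number of connected components of G. -/
/-- Number of connected components of the subgraph of `G` induced by `S`. -/
noncomputable def numComponents {V : Type*} (G : SimpleGraph V) (S : Set V) : ℕ :=
  Nat.card (G.induce S).ConnectedComponent

/-- `e` is a marking sequence for the colouring `c`: an enumeration (without
repetition) of exactly the colours occurring. -/
def IsMarkingSeq {V : Type*} (c : V → ℕ) (e : List ℕ) : Prop :=
  e.Nodup ∧ ∀ x, x ∈ e ↔ ∃ v, c v = x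

/-- Locality of `G` coloured by `c` w.r.t. the marking sequence `e`:
the maximal number of connected components over all marking stages. -/
noncomputable def locSeq {V : Type*} (G : SimpleGraph V) (c : V → ℕ) (e : List ℕ) : ℕ :=
  ((List.range e.length).map fun i =>
    numComponents G {v | c v ∈ e.take (i + 1)}).foldr max 0

/-- Locality of `G` w.r.t. the colouring `c`. -/
noncomputable def loc {V : Type*} (G : SimpleGraph V) (c : V → ℕ) : ℕ :=
  sInf {k | ∃ e, IsMarkingSeq c e ∧ locSeq G c e = k}

/-- Number of connected components of `G`. -/
noncomputable def gamma {V : Type*} (G : SimpleGraph V) : ℕ :=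
  Nat.card G.ConnectedComponent

section Helpers

open SimpleGraph

variable {V : Type*} {G : SimpleGraph V}

lemma mem_take_iff_indexOf_lt {α} [DecidableEq α] {l : List α} {a : α} (h : a ∈ l) (k : ℕ) :
    a ∈ l.take k ↔ l.idxOf a < k := by
  induction l generalizing k with
  | nil => simp at h
  | cons b l ih =>
    cases k with
    | zero => simp
    | succ k =>
      by_cases hab : a = b
      · subst hab; simp [List.idxOf_cons_self]
      · rw [List.mem_cons] at h
        simp [List.take_succ_cons, List.idxOf_cons_ne _ (by exact fun hc => hab hc.symm),
          hab, ih (h.resolve_left hab), Nat.succ_lt_succ_iff]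

lemma foldr_max_le {l : List ℕ} {m : ℕ} (h : ∀ x ∈ l, x ≤ m) : l.foldr max 0 ≤ m := by
  induction l with
  | nil => simp
  | cons a l ih => simpa using ⟨h a (by simp), ih fun x hx => h x (by simp [hx])⟩

lemma le_foldr_max {l : List ℕ} {x : ℕ} (h : x ∈ l) : x ≤ l.foldr max 0 := by
  induction l with
  | nil => simp at h
  | cons a l ih =>
    rcases List.mem_cons.1 h with rfl | h
    · simp
    · exact le_trans (ih h) (by simp)

/-- Inclusion hom between induced subgraphs on nested vertex sets. -/
def incHom (G : SimpleGraph V) {S T : Set V} (h : S ⊆ T) : G.induce S →g G.induce T where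
  toFun := fun x => ⟨x, h x.2⟩
  map_rel' := fun hab => hab

/-- `S` is good if `G`-reachability between points of `S` is witnessed inside `S`. -/
def Good (G : SimpleGraph V) (S : Set V) : Prop :=
  ∀ v w : S, G.Reachable (v : V) w → (G.induce S).Reachable v w

lemma reach_mono {S T : Set V} (h : S ⊆ T) {a b : S}
    (r : (G.induce S).Reachable a b) :
    (G.induce T).Reachable ⟨a, h a.2⟩ ⟨b, h b.2⟩ :=
  r.map (incHom G h)

lemma walk_stays {S : Set V} (hB : ∀ a b, a ∉ S → b ∈ S → ¬G.Adj a b)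
    {u b : V} (w : G.Walk u b) : u ∉ S → b ∉ S := by
  induction w with
  | nil => exact id
  | @cons x y z hadj p ih => exact fun hx => ih (fun hy => hB x y hx hy hadj)

lemma good_extend {S : Set V} (hS : Good G S) (hne : Sᶜ.Nonempty) :
    ∃ v ∉ S, Good G (insert v S) := by
  classical
  by_cases hedge : ∃ v s, v ∉ S ∧ s ∈ S ∧ G.Adj v s
  · obtain ⟨v, s, hv, hs, hadj⟩ := hedge
    refine ⟨v, hv, ?_⟩
    have hsub : S ⊆ insert v S := Set.subset_insert _ _
    have key : ∀ (b : V) (hb : b ∈ S), G.Reachable v b →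
        (G.induce (insert v S)).Reachable ⟨v, Set.mem_insert _ _⟩ ⟨b, hsub hb⟩ := by
      intro b hb hreach
      have h1 : G.Reachable s b := hadj.reachable.symm.trans hreach
      have h2 := hS ⟨s, hs⟩ ⟨b, hb⟩ h1
      have h3 := reach_mono hsub h2
      have hadj' : (G.induce (insert v S)).Adj ⟨v, Set.mem_insert _ _⟩ ⟨s, hsub hs⟩ := hadj
      exact (hadj'.reachable).trans h3
    rintro ⟨a, ha⟩ ⟨b, hb⟩ hr
    rcases Set.mem_insert_iff.1 ha with rfl | ha'
    · rcases Set.mem_insert_iff.1 hb with rfl | hb'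
      · exact SimpleGraph.Reachable.refl _
      · exact key b hb' hr
    · rcases Set.mem_insert_iff.1 hb with rfl | hb'
      · exact (key a ha' hr.symm).symm
      · exact reach_mono hsub (hS ⟨a, ha'⟩ ⟨b, hb'⟩ hr)
  · push_neg at hedge
    obtain ⟨u, hu⟩ := hne
    refine ⟨u, hu, ?_⟩
    have hsub : S ⊆ insert u S := Set.subset_insert _ _
    have hB : ∀ a b, a ∉ S → b ∈ S → ¬G.Adj a b := fun a b ha hb => hedge a b ha hb
    rintro ⟨a, ha⟩ ⟨b, hb⟩ hr
    rcases Set.mem_insert_iff.1 ha with rfl | ha'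
    · rcases Set.mem_insert_iff.1 hb with rfl | hb'
      · exact SimpleGraph.Reachable.refl _
      · obtain ⟨w⟩ := hr
        exact absurd hb' (walk_stays hB w hu)
    · rcases Set.mem_insert_iff.1 hb with rfl | hb'
      · obtain ⟨w⟩ := hr.symm
        exact absurd ha' (walk_stays hB w hu)
      · exact reach_mono hsub (hS ⟨a, ha'⟩ ⟨b, hb'⟩ hr)

lemma numComponents_le_of_good [Finite V] {S : Set V} (h : Good G S) :
    numComponents G S ≤ gamma G := by
  apply Nat.card_le_card_of_injective (ConnectedComponent.map (Embedding.induce S).toHom)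
  intro c d hcd
  obtain ⟨a, rfl⟩ := c.exists_rep
  obtain ⟨b, rfl⟩ := d.exists_rep
  have hr : G.Reachable (a : V) b := (ConnectedComponent.eq).1 hcd
  exact (ConnectedComponent.eq).2 (h a b hr)

lemma numComponents_univ : numComponents G Set.univ = gamma G :=
  Nat.card_congr (Iso.connectedComponentEquiv (induceUnivIso G))

lemma buildAux [Fintype V] (G : SimpleGraph V) : ∀ (m : ℕ) (L : List V), L.Nodup →
    (∀ k, Good G {v | v ∈ L.take k}) → L.length + m = Fintype.card V →
    ∃ L' : List V, L'.Nodup ∧ (∀ v, v ∈ L') ∧ ∀ k, Good G {v | v ∈ L'.take k} := by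
  classical
  intro m
  induction m with
  | zero =>
    intro L hnd hgood hlen
    refine ⟨L, hnd, ?_, hgood⟩
    have hcard : L.toFinset.card = Fintype.card V := by
      rw [List.toFinset_card_of_nodup hnd]; simpa using hlen
    have := Finset.eq_univ_of_card _ hcard
    intro v
    have : v ∈ L.toFinset := this ▸ Finset.mem_univ v
    simpa using this
  | succ m ih =>
    intro L hnd hgood hlen
    have hne : ({v | v ∈ L} : Set V)ᶜ.Nonempty := by
      by_contra h
      rw [Set.not_nonempty_iff_eq_empty, ← Set.compl_univ, compl_inj_iff] at h
      have hall : ∀ v : V, v ∈ L := fun v => by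
        have : v ∈ ({v | v ∈ L} : Set V) := h ▸ Set.mem_univ v
        exact this
      have h1 : Fintype.card V ≤ L.length := by
        calc Fintype.card V = Finset.univ.card := rfl
          _ ≤ L.toFinset.card := Finset.card_le_card (fun v _ => by simpa using hall v)
          _ ≤ L.length := L.toFinset_card_le
      omega
    have hgoodL : Good G {v | v ∈ L} := by
      have := hgood L.length
      simpa using this
    obtain ⟨v, hv, hgood'⟩ := good_extend hgoodL hne
    refine ih (L ++ [v]) ?_ ?_ ?_
    · rw [List.nodup_append]
      refine ⟨hnd, List.nodup_singleton v, ?_⟩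
      intro a ha _ hb
      rw [List.mem_singleton] at hb
      subst hb
      exact fun h => hv (h ▸ ha)
    · intro k
      rcases le_or_gt k L.length with hk | hk
      · rw [List.take_append_of_le_length hk]
        exact hgood k
      · rw [List.take_of_length_le (by simp; omega)]
        have hset : {x | x ∈ L ++ [v]} = insert v {x | x ∈ L} := by
          ext x; simp [or_comm]
        rw [hset]; exact hgood'
    · simp; omega

lemma buildList [Fintype V] (G : SimpleGraph V) :
    ∃ L : List V, L.Nodup ∧ (∀ v, v ∈ L) ∧ ∀ k, Good G {v | v ∈ L.take k} := by
  refine buildAux G (Fintype.card V) [] (by simp) ?_ (by simp)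
  intro k
  rintro ⟨a, ha⟩
  simp at ha

end Helpers

open SimpleGraph in
theorem exists_valid_colouring_loc_eq_components {V : Type*} [Fintype V] (G : SimpleGraph V) :
    ∃ c : V → ℕ, (∀ u v, G.Adj u v → c u ≠ c v) ∧ loc G c = gamma G := by
  classical
  obtain ⟨L, hnd, hall, hgood⟩ := buildList G
  refine ⟨fun v => L.idxOf v, ?_, ?_⟩
  · intro u v hadj h
    exact hadj.ne ((List.idxOf_inj (hall u)).1 h)
  · have he : IsMarkingSeq (fun v => L.idxOf v) (List.range L.length) := by
      refine ⟨List.nodup_range, ?_⟩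
      intro x
      simp only [List.mem_range]
      constructor
      · intro hx
        exact ⟨L[x], hnd.idxOf_getElem x hx⟩
      · rintro ⟨v, rfl⟩
        exact List.idxOf_lt_length_iff.2 (hall v)
    have hset : ∀ i : ℕ,
        {v | (fun v => L.idxOf v) v ∈ (List.range L.length).take (i+1)}
          = {v | v ∈ L.take (min (i+1) L.length)} := by
      intro i
      ext v
      rw [Set.mem_setOf_eq, Set.mem_setOf_eq, List.take_range, List.mem_range,
        mem_take_iff_indexOf_lt (hall v)]
    have hlocseq : locSeq G (fun v => L.idxOf v) (List.range L.length) = gamma G := by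
      rcases isEmpty_or_nonempty V with hV | hV
      · have hL : L = [] := by
          cases L with
          | nil => rfl
          | cons a _ => exact isEmptyElim a
        have hg : gamma G = 0 := by
          have : IsEmpty G.ConnectedComponent := ⟨fun x => x.ind fun v => isEmptyElim v⟩
          simp [gamma, Nat.card_of_isEmpty]
        rw [hg, hL]
        simp [locSeq]
      · apply le_antisymm
        · unfold locSeq
          rw [List.length_range]
          apply foldr_max_le
          intro x hx
          simp only [List.mem_map, List.mem_range] at hx
          obtain ⟨i, _, rfl⟩ := hx
          rw [hset i]
          exact numComponents_le_of_good (hgood _)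
        · have hnpos : 0 < L.length := by
            obtain ⟨v⟩ := hV
            exact List.length_pos_iff.2 (fun h => by rw [h] at hall; exact List.not_mem_nil (hall v))
          unfold locSeq
          rw [List.length_range]
          apply le_foldr_max
          simp only [List.mem_map, List.mem_range]
          refine ⟨L.length - 1, by omega, ?_⟩
          rw [hset (L.length - 1)]
          have hmin : min (L.length - 1 + 1) L.length = L.length := by omega
          rw [hmin, List.take_length]
          have huniv : {v : V | v ∈ L} = Set.univ := Set.eq_univ_of_forall hall
          rw [huniv, numComponents_univ]
    apply le_antisymm
    · exact Nat.sInf_le ⟨List.range L.length, he, hlocseq⟩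
    · refine le_csInf ⟨gamma G, ⟨List.range L.length, he, hlocseq⟩⟩ ?_
      rintro k ⟨e', he', rfl⟩
      rcases isEmpty_or_nonempty V with hV | hV
      · have : IsEmpty G.ConnectedComponent := ⟨fun x => x.ind fun v => isEmptyElim v⟩
        simp [gamma, Nat.card_of_isEmpty]
      · obtain ⟨v0⟩ := hV
        have hv0 : (L.idxOf v0) ∈ e' := (he'.2 _).2 ⟨v0, rfl⟩
        have hlen : 0 < e'.length :=
          List.length_pos_iff.2 (fun h => by rw [h] at hv0; exact List.not_mem_nil hv0)
        unfold locSeq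
        apply le_foldr_max
        simp only [List.mem_map, List.mem_range]
        refine ⟨e'.length - 1, by omega, ?_⟩
        have htake : e'.take (e'.length - 1 + 1) = e' := by
          rw [Nat.sub_add_cancel hlen, List.take_length]
        rw [htake]
        have huniv : {v : V | (fun v => L.idxOf v) v ∈ e'} = Set.univ :=
          Set.eq_univ_of_forall fun v => (he'.2 _).2 ⟨v, rfl⟩
        rw [huniv, numComponents_univ]
end

section
/- For every finite undirected graph G with a (not necessarily valid) colouring c, there exists an induced minor G' of G (obtained by contracting edges whose endpoints share the same colour) with a valid colouring induced by c, such that loc(G,c) = loc(G',c). -/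
section Aux
variable {V : Type*} (G : SimpleGraph V) (c : V → ℕ)

private abbrev Hgr : SimpleGraph V := SimpleGraph.fromRel fun a b => G.Adj a b ∧ c a = c b

private lemma H_adj {a b : V} (h : (Hgr G c).Adj a b) :
    a ≠ b ∧ G.Adj a b ∧ c a = c b := by
  rw [SimpleGraph.fromRel_adj] at h
  obtain ⟨hne, h | h⟩ := h
  · exact ⟨hne, h.1, h.2⟩
  · exact ⟨hne, h.1.symm, h.2.symm⟩

private lemma col_const {u v : V} (h : (Hgr G c).Reachable u v) : c u = c v := by
  obtain ⟨w⟩ := h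
  induction w with
  | nil => rfl
  | cons h _ ih => exact (H_adj G c h).2.2.trans ih

end Aux

theorem exists_induced_minor_valid_same_loc {V : Type*} [Fintype V]
    (G : SimpleGraph V) (c : V → ℕ) :
    ∃ (V' : Type) (_ : Fintype V') (G' : SimpleGraph V') (f : V → V') (c' : V' → ℕ),
      Function.Surjective f ∧
      (∀ v, c' (f v) = c v) ∧
      -- fibres of f are exactly the connected components of the monochromatic subgraph
      (∀ u v, f u = f v ↔
        (SimpleGraph.fromRel fun a b => G.Adj a b ∧ c a = c b).Reachable u v) ∧
      -- G' is the contraction of these monochromatic edges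
      (∀ x y, G'.Adj x y ↔ x ≠ y ∧ ∃ u v, f u = x ∧ f v = y ∧ G.Adj u v) ∧
      -- the induced colouring is valid on G'
      (∀ x y, G'.Adj x y → c' x ≠ c' y) ∧
      loc G c = loc G' c' := by
  classical
  set H := Hgr G c with hH
  have hQfin : Finite H.ConnectedComponent := Quot.finite _
  set n := Nat.card H.ConnectedComponent with hn
  let eq : H.ConnectedComponent ≃ Fin n := Finite.equivFin _
  let f : V → Fin n := fun v => eq (H.connectedComponentMk v)
  -- fibre characterization
  have hfib : ∀ u v, f u = f v ↔ H.Reachable u v := by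
    intro u v
    rw [show f u = f v ↔ H.connectedComponentMk u = H.connectedComponentMk v from eq.injective.eq_iff]
    exact SimpleGraph.ConnectedComponent.eq
  have hfsurj : Function.Surjective f := by
    intro x
    obtain ⟨v, hv⟩ := Quot.exists_rep (eq.symm x)
    refine ⟨v, ?_⟩
    show eq (H.connectedComponentMk v) = x
    have : H.connectedComponentMk v = eq.symm x := hv
    rw [this, Equiv.apply_symm_apply]
  let cbar : H.ConnectedComponent → ℕ :=
    SimpleGraph.ConnectedComponent.lift c (fun u v p _ => col_const G c ⟨p⟩)
  let c' : Fin n → ℕ := fun x => cbar (eq.symm x)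
  have hc' : ∀ v, c' (f v) = c v := by intro v; simp [c', f, cbar]
  let G' : SimpleGraph (Fin n) :=
    { Adj := fun x y => x ≠ y ∧ ∃ u v, f u = x ∧ f v = y ∧ G.Adj u v
      symm := by
        constructor; rintro x y ⟨hne, u, v, hu, hv, h⟩
        exact ⟨hne.symm, v, u, hv, hu, h.symm⟩
      loopless := by constructor; rintro x ⟨hne, -⟩; exact hne rfl }
  have hG'adj : ∀ x y, G'.Adj x y ↔ x ≠ y ∧ ∃ u v, f u = x ∧ f v = y ∧ G.Adj u v :=
    fun _ _ => Iff.rfl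
  have hvalid : ∀ x y, G'.Adj x y → c' x ≠ c' y := by
    rintro x y ⟨hne, u, v, hu, hv, hadj⟩ hcc
    rw [← hu, ← hv, hc', hc'] at hcc
    have : H.Adj u v := by
      rw [SimpleGraph.fromRel_adj]
      refine ⟨?_, Or.inl ⟨hadj, hcc⟩⟩
      rintro rfl; exact hne (hu ▸ hv ▸ rfl)
    exact hne (hu ▸ hv ▸ (hfib u v).2 this.reachable)
  -- key: component counts agree on preimage sets
  have key : ∀ S' : Set (Fin n),
      numComponents G (f ⁻¹' S') = numComponents G' S' := by
    intro S'
    set S : Set V := f ⁻¹' S' with hS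
    -- fiber lemma: H-reachable vertices in S are (G.induce S)-reachable
    have fiber : ∀ u v : V, H.Reachable u v → ∀ (hu : u ∈ S) (hv : v ∈ S),
        (G.induce S).Reachable ⟨u, hu⟩ ⟨v, hv⟩ := by
      intro u v h
      obtain ⟨w⟩ := h
      induction w with
      | nil => intro hu hv; exact SimpleGraph.Reachable.refl _
      | @cons a b _ h p ih =>
        intro hu hv
        obtain ⟨hne, hadj, _⟩ := H_adj G c h
        have hb : b ∈ S := by
          have : f a = f b := (hfib a b).2 h.reachable
          simpa [hS, Set.mem_preimage, ← this] using hu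
        have step : (G.induce S).Adj ⟨a, hu⟩ ⟨b, hb⟩ := by
          simpa [SimpleGraph.comap_adj] using hadj
        exact step.reachable.trans (ih hb hv)
    -- forward: walks in G.induce S map to reachability in G'.induce S'
    have fwd : ∀ (u v : ↑S) (_ : (G.induce S).Walk u v),
        (G'.induce S').Reachable ⟨f u.1, u.2⟩ ⟨f v.1, v.2⟩ := by
      intro u v w
      induction w with
      | nil => exact SimpleGraph.Reachable.refl _
      | @cons a b _ h p ih =>
        have hadj : G.Adj a.1 b.1 := h
        by_cases hfe : f a.1 = f b.1
        · have : (⟨f a.1, a.2⟩ : ↑S') = ⟨f b.1, b.2⟩ := Subtype.ext hfe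
          rw [this]; exact ih
        · have step : (G'.induce S').Adj ⟨f a.1, a.2⟩ ⟨f b.1, b.2⟩ := by
            simp only [SimpleGraph.comap_adj]
            exact ⟨hfe, a.1, b.1, rfl, rfl, hadj⟩
          exact step.reachable.trans ih
    -- backward: walks in G'.induce S' lift
    have bwd : ∀ (x y : ↑S') (_ : (G'.induce S').Walk x y) (u v : ↑S),
        f u.1 = x.1 → f v.1 = y.1 → (G.induce S).Reachable u v := by
      intro x y w
      induction w with
      | nil =>
        intro u v hu hv
        have : H.Reachable u.1 v.1 := (hfib _ _).1 (hu.trans hv.symm)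
        exact fiber _ _ this u.2 v.2
      | @cons a b _ h p ih =>
        intro u v hu hv
        have hadj : G'.Adj a.1 b.1 := h
        obtain ⟨hne, u', v', hu', hv', hGadj⟩ := hadj
        have hu'S : u' ∈ S := by simp [hS, Set.mem_preimage, hu', a.2]
        have hv'S : v' ∈ S := by simp [hS, Set.mem_preimage, hv', b.2]
        have r1 : (G.induce S).Reachable u ⟨u', hu'S⟩ :=
          fiber _ _ ((hfib _ _).1 (hu.trans hu'.symm)) u.2 hu'S
        have r2 : (G.induce S).Adj ⟨u', hu'S⟩ ⟨v', hv'S⟩ := by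
          simpa [SimpleGraph.comap_adj] using hGadj
        have r3 : (G.induce S).Reachable ⟨v', hv'S⟩ v := ih ⟨v', hv'S⟩ v hv' hv
        exact (r1.trans r2.reachable).trans r3
    -- bijection between component types
    let Φ : (G.induce S).ConnectedComponent → (G'.induce S').ConnectedComponent :=
      SimpleGraph.ConnectedComponent.lift
        (fun v => (G'.induce S').connectedComponentMk ⟨f v.1, v.2⟩)
        (fun u v p _ => SimpleGraph.ConnectedComponent.sound (fwd u v p))
    have hΦbij : Function.Bijective Φ := by
      constructor
      · intro A B
        refine SimpleGraph.ConnectedComponent.ind₂ (fun u v hEq => ?_) A B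
        simp only [Φ, SimpleGraph.ConnectedComponent.lift_mk] at hEq
        have hr := SimpleGraph.ConnectedComponent.eq.mp hEq
        obtain ⟨w⟩ := hr
        exact SimpleGraph.ConnectedComponent.sound (bwd _ _ w u v rfl rfl)
      · refine SimpleGraph.ConnectedComponent.ind (fun x => ?_)
        obtain ⟨v, hv⟩ := hfsurj x.1
        have hvS : v ∈ S := by simp [hS, Set.mem_preimage, hv, x.2]
        refine ⟨(G.induce S).connectedComponentMk ⟨v, hvS⟩, ?_⟩
        simp only [Φ, SimpleGraph.ConnectedComponent.lift_mk]
        congr 1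
        exact Subtype.ext hv
    exact Nat.card_eq_of_bijective Φ hΦbij
  -- loc equality
  have hsets : ∀ T : Set ℕ, {v | c v ∈ T} = f ⁻¹' {x | c' x ∈ T} := by
    intro T; ext v; simp [Set.mem_preimage, hc' v]
  have hlocSeq : ∀ e : List ℕ, locSeq G c e = locSeq G' c' e := by
    intro e
    unfold locSeq
    congr 1
    apply List.map_congr_left
    intro i _
    have : {v | c v ∈ e.take (i + 1)} = f ⁻¹' {x | c' x ∈ e.take (i + 1)} :=
      hsets {x | x ∈ e.take (i + 1)}
    rw [show numComponents G {v | c v ∈ e.take (i + 1)}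
        = numComponents G (f ⁻¹' {x | c' x ∈ e.take (i + 1)}) by rw [← this]]
    exact key _
  have hmark : ∀ e, IsMarkingSeq c e ↔ IsMarkingSeq c' e := by
    intro e
    unfold IsMarkingSeq
    refine and_congr_right fun _ => forall_congr' fun x => ?_
    refine iff_congr Iff.rfl ⟨?_, ?_⟩
    · rintro ⟨v, rfl⟩; exact ⟨f v, hc' v⟩
    · rintro ⟨y, rfl⟩
      obtain ⟨v, rfl⟩ := hfsurj y
      exact ⟨v, (hc' v).symm⟩
  have hloc : loc G c = loc G' c' := by
    unfold loc
    congr 1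
    ext k
    constructor
    · rintro ⟨e, he, rfl⟩; exact ⟨e, (hmark e).1 he, (hlocSeq e).symm⟩
    · rintro ⟨e, he, rfl⟩; exact ⟨e, (hmark e).2 he, hlocSeq e⟩
  exact ⟨Fin n, inferInstance, G', f, c', hfsurj, hc', hfib, hG'adj, hvalid, hloc⟩
end

section
/- For n ≥ 4, the cycle graph C_n with a 2-colouring whose colour classes are V_1 and V_2 (each of size at least 2) has locality min(|V_1|,|V_2|) with respect to that colouring. -/
/-- Components of an edgeless graph biject with the vertices. -/
lemma card_components_bot {W : Type*} : Nat.card (⊥ : SimpleGraph W).ConnectedComponent = Nat.card W := by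
  symm
  apply Nat.card_eq_of_bijective (⊥ : SimpleGraph W).connectedComponentMk
  constructor
  · intro u v h
    exact SimpleGraph.reachable_bot.mp ((SimpleGraph.ConnectedComponent.eq).mp h)
  · exact fun C => C.ind fun v => ⟨v, rfl⟩

lemma numComponents_indep {V : Type*} (G : SimpleGraph V) (S : Set V)
    (h : ∀ u v : V, u ∈ S → v ∈ S → ¬ G.Adj u v) : numComponents G S = Nat.card S := by
  have hbot : G.induce S = ⊥ := by
    ext u v
    simp only [SimpleGraph.comap_adj, SimpleGraph.bot_adj, iff_false]
    exact h u v u.2 v.2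
  rw [numComponents, hbot, card_components_bot]

lemma numComponents_connected {V : Type*} (G : SimpleGraph V) (hG : G.Connected) :
    numComponents G Set.univ = 1 := by
  rw [numComponents]
  rw [Nat.card_congr (SimpleGraph.induceUnivIso G).connectedComponentEquiv]
  rw [Nat.card_eq_one_iff_unique]
  refine ⟨⟨?_⟩, ⟨G.connectedComponentMk (Classical.choice hG.nonempty)⟩⟩
  intro C D
  refine C.ind fun u => D.ind fun v => ?_
  exact SimpleGraph.ConnectedComponent.sound (hG.preconnected u v)

theorem cycleGraph_two_colouring_loc (n : ℕ) (hn : 4 ≤ n) (c : Fin n → ℕ)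
    (a b : ℕ) (hab : a ≠ b)
    (hcover : ∀ v, c v = a ∨ c v = b)
    (hvalid : ∀ u v, (SimpleGraph.cycleGraph n).Adj u v → c u ≠ c v)
    (h1 : 2 ≤ (Finset.univ.filter fun v => c v = a).card)
    (h2 : 2 ≤ (Finset.univ.filter fun v => c v = b).card) :
    loc (SimpleGraph.cycleGraph n) c =
      min (Finset.univ.filter fun v => c v = a).card
          (Finset.univ.filter fun v => c v = b).card := by
  set G := SimpleGraph.cycleGraph n with hG
  set ca := (Finset.univ.filter fun v => c v = a).card with hca
  set cb := (Finset.univ.filter fun v => c v = b).card with hcb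
  -- vertices of each colour exist
  obtain ⟨va, hva⟩ := Finset.card_pos.mp (by omega : 0 < (Finset.univ.filter fun v => c v = a).card)
  obtain ⟨vb, hvb⟩ := Finset.card_pos.mp (by omega : 0 < (Finset.univ.filter fun v => c v = b).card)
  simp only [Finset.mem_filter, Finset.mem_univ, true_and] at hva hvb
  -- number of components of a monochromatic class
  have hclass : ∀ x : ℕ, numComponents G {v | c v = x}
      = (Finset.univ.filter fun v => c v = x).card := by
    intro x
    rw [numComponents_indep G _ (fun u v hu hv hadj => hvalid u v hadj (hu.trans hv.symm))]
    rw [Nat.card_eq_fintype_card, ← Set.toFinset_card]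
    congr 1
    ext v
    simp
  -- number of components after both colours
  have hall : ∀ (e : List ℕ), a ∈ e → b ∈ e →
      numComponents G {v | c v ∈ e} = 1 := by
    intro e hae hbe
    have : {v : Fin n | c v ∈ e} = Set.univ := by
      ext v
      simp only [Set.mem_setOf_eq, Set.mem_univ, iff_true]
      rcases hcover v with h | h <;> rw [h] <;> assumption
    rw [this]
    apply numComponents_connected
    obtain ⟨m, rfl⟩ : ∃ m, n = m + 1 := ⟨n - 1, by omega⟩
    exact SimpleGraph.cycleGraph_connected
  -- the two marking sequences
  have hlab : locSeq G c [a, b] = ca := by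
    rw [locSeq]
    show max (numComponents G {v | c v ∈ [a]}) (max (numComponents G {v | c v ∈ [a, b]}) 0) = ca
    rw [hall [a, b] (by simp) (by simp)]
    have : {v : Fin n | c v ∈ [a]} = {v | c v = a} := by ext v; simp
    rw [this, hclass a]
    omega
  have hlba : locSeq G c [b, a] = cb := by
    rw [locSeq]
    show max (numComponents G {v | c v ∈ [b]}) (max (numComponents G {v | c v ∈ [b, a]}) 0) = cb
    rw [hall [b, a] (by simp) (by simp)]
    have : {v : Fin n | c v ∈ [b]} = {v | c v = b} := by ext v; simp
    rw [this, hclass b]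
    omega
  -- marking sequences are exactly [a,b] and [b,a]
  have hms : ∀ e : List ℕ, IsMarkingSeq c e → e = [a, b] ∨ e = [b, a] := by
    rintro e ⟨hnd, hmem⟩
    have hmem' : ∀ x, x ∈ e ↔ (x = a ∨ x = b) := by
      intro x
      rw [hmem]
      constructor
      · rintro ⟨v, rfl⟩; exact hcover v
      · rintro (rfl | rfl)
        · exact ⟨va, hva⟩
        · exact ⟨vb, hvb⟩
    have hperm : e.Perm [a, b] := by
      rw [List.perm_ext_iff_of_nodup hnd (by simp [hab])]
      intro x
      rw [hmem']
      simp
    have hlen : e.length = 2 := by simpa using hperm.length_eq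
    match e, hlen with
    | [x, y], _ =>
      have hx := (hmem' x).mp (by simp)
      have hy := (hmem' y).mp (by simp)
      have hxy : x ≠ y := by simp at hnd; tauto
      rcases hx with rfl | rfl <;> rcases hy with rfl | rfl <;> simp_all
  have habms : IsMarkingSeq c [a, b] := by
    refine ⟨by simp [hab], fun x => ?_⟩
    constructor
    · rintro h
      simp at h
      rcases h with rfl | rfl
      · exact ⟨va, hva⟩
      · exact ⟨vb, hvb⟩
    · rintro ⟨v, rfl⟩
      rcases hcover v with h | h <;> simp [h]
  have hbams : IsMarkingSeq c [b, a] := by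
    refine ⟨by simp [hab.symm], fun x => ?_⟩
    constructor
    · rintro h
      simp at h
      rcases h with rfl | rfl
      · exact ⟨vb, hvb⟩
      · exact ⟨va, hva⟩
    · rintro ⟨v, rfl⟩
      rcases hcover v with h | h <;> simp [h]
  -- compute the sInf
  rw [loc]
  apply le_antisymm
  · rcases le_total ca cb with h | h
    · calc sInf _ ≤ ca := Nat.sInf_le (show ca ∈ {k | ∃ e, IsMarkingSeq c e ∧ locSeq G c e = k} from ⟨[a, b], habms, hlab⟩)
        _ = min ca cb := (min_eq_left h).symm
    · calc sInf _ ≤ cb := Nat.sInf_le (show cb ∈ {k | ∃ e, IsMarkingSeq c e ∧ locSeq G c e = k} from ⟨[b, a], hbams, hlba⟩)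
        _ = min ca cb := (min_eq_right h).symm
  · apply le_csInf (⟨ca, [a, b], habms, hlab⟩ : {k | ∃ e, IsMarkingSeq c e ∧ locSeq G c e = k}.Nonempty)
    rintro k ⟨e, he, rfl⟩
    rcases hms e he with rfl | rfl
    · rw [hlab]; exact min_le_left _ _
    · rw [hlba]; exact min_le_right _ _
end

section
/- For every word w over an alphabet Σ, w is strictly k-local if and only if its condensed form cond(w) (obtained by collapsing each maximal run of equal consecutive letters to a single letter) is strictly k-local. -/
/-- Auxiliary block counter: counts maximal runs of `true` given the previous value. -/
def countBlocksAux : Bool → List Bool → ℕ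
  | _, [] => 0
  | prev, b :: rest => (if b = true ∧ prev = false then 1 else 0) + countBlocksAux b rest

/-- Number of maximal runs of `true` in a boolean list. -/
def countBlocks (l : List Bool) : ℕ := countBlocksAux false l

/-- `e` is a marking sequence for the word `w`: an enumeration (without
repetition) of exactly the letters occurring in `w`. -/
def WIsMarkingSeq {α : Type*} (w e : List α) : Prop :=
  e.Nodup ∧ ∀ x, x ∈ e ↔ x ∈ w

/-- Locality of `w` w.r.t. the marking sequence `e`: the maximal number of
marked blocks over all marking stages. -/
def wlocSeq {α : Type*} [DecidableEq α] (w e : List α) : ℕ :=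
  ((List.range e.length).map fun i =>
    countBlocks (w.map fun a => decide (a ∈ e.take (i + 1)))).foldr max 0

/-- Locality of the word `w`. -/
noncomputable def wloc {α : Type*} [DecidableEq α] (w : List α) : ℕ :=
  sInf {k | ∃ e, WIsMarkingSeq w e ∧ wlocSeq w e = k}

lemma mem_destutter'_ne {α : Type*} [DecidableEq α] (x : α) :
    ∀ (l : List α) (a : α), x ∈ List.destutter' (· ≠ ·) a l ↔ x ∈ a :: l := by
  intro l
  induction l with
  | nil => intro a; simp [List.destutter']
  | cons b t ih =>
    intro a
    by_cases h : a ≠ b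
    · rw [List.destutter'_cons, if_pos h]
      simp [ih b]
    · rw [List.destutter'_cons, if_neg h]
      push_neg at h; subst h
      rw [ih a]; simp

lemma countBlocksAux_destutter' {α : Type*} [DecidableEq α] (f : α → Bool) :
    ∀ (l : List α) (a : α) (prev : Bool),
      countBlocksAux prev ((List.destutter' (· ≠ ·) a l).map f)
        = countBlocksAux prev ((a :: l).map f) := by
  intro l
  induction l with
  | nil => intro a prev; rfl
  | cons b t ih =>
    intro a prev
    by_cases h : a ≠ b
    · rw [List.destutter'_cons, if_pos h]
      simp only [List.map_cons, countBlocksAux]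
      rw [ih b (f a)]; rfl
    · rw [List.destutter'_cons, if_neg h]
      push_neg at h; subst h
      rw [ih a prev]
      simp [countBlocksAux]

lemma countBlocks_destutter {α : Type*} [DecidableEq α] (f : α → Bool) (w : List α) :
    countBlocks ((w.destutter (· ≠ ·)).map f) = countBlocks (w.map f) := by
  cases w with
  | nil => rfl
  | cons a t => exact countBlocksAux_destutter' f t a false

lemma wlocSeq_destutter {α : Type*} [DecidableEq α] (w e : List α) :
    wlocSeq (w.destutter (· ≠ ·)) e = wlocSeq w e := by
  unfold wlocSeq
  congr 1
  apply List.map_congr_left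
  intro i _
  exact countBlocks_destutter _ w

lemma markingSeq_destutter {α : Type*} [DecidableEq α] (w e : List α) :
    WIsMarkingSeq (w.destutter (· ≠ ·)) e ↔ WIsMarkingSeq w e := by
  unfold WIsMarkingSeq
  have hm : ∀ x : α, x ∈ w.destutter (· ≠ ·) ↔ x ∈ w := by
    intro x
    cases w with
    | nil => rfl
    | cons a t => exact mem_destutter'_ne x t a
  constructor <;> rintro ⟨h1, h2⟩ <;> exact ⟨h1, fun x => by rw [h2 x]; rw [hm x]⟩

lemma wloc_destutter {α : Type*} [DecidableEq α] (w : List α) :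
    wloc (w.destutter (· ≠ ·)) = wloc w := by
  unfold wloc
  congr 1
  ext k
  simp only [Set.mem_setOf_eq]
  constructor <;> rintro ⟨e, h1, h2⟩
  · exact ⟨e, (markingSeq_destutter w e).1 h1, by rw [← wlocSeq_destutter]; exact h2⟩
  · exact ⟨e, (markingSeq_destutter w e).2 h1, by rw [wlocSeq_destutter]; exact h2⟩

theorem strictly_local_iff_condensed {α : Type*} [DecidableEq α] (w : List α) (k : ℕ) :
    wloc w = k ↔ wloc (w.destutter (· ≠ ·)) = k := by
  rw [wloc_destutter]
end

section
/- For d ≥ 3, the sunflower graph S_d with a minimal valid colouring (as described) is ⌊(d−1)/2⌋-local. -/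
/-- The sunflower graph `S_d`: a wheel (hub `none` plus an outer cycle on the
vertices `some (inl i)`) together with, for each outer-cycle edge, an extra
vertex `some (inr i)` adjacent to both of its endpoints. -/
def sunflowerGraph (d : ℕ) : SimpleGraph (Option (ZMod (d - 1) ⊕ ZMod (d - 1))) :=
  SimpleGraph.fromRel fun u v =>
    (u = none ∧ ∃ i, v = some (Sum.inl i)) ∨
    (∃ i, u = some (Sum.inl i) ∧ v = some (Sum.inl (i + 1))) ∨
    (∃ i, u = some (Sum.inr i) ∧ (v = some (Sum.inl i) ∨ v = some (Sum.inl (i + 1))))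

lemma numComponents_le_card {V : Type*} [Finite V] (G : SimpleGraph V) (S : Set V) :
    numComponents G S ≤ Nat.card S :=
  Nat.card_le_card_of_surjective (G.induce S).connectedComponentMk Quot.exists_rep

lemma numComponents_le_one {V : Type*} (G : SimpleGraph V) (S : Set V)
    (h : (G.induce S).Preconnected) : numComponents G S ≤ 1 := by
  have hs : Subsingleton (SimpleGraph.induce S G).ConnectedComponent := by
    constructor
    intro a b
    induction a using SimpleGraph.ConnectedComponent.ind with
    | _ v =>
    induction b using SimpleGraph.ConnectedComponent.ind with
    | _ w => exact SimpleGraph.ConnectedComponent.sound (h v w)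
  rcases isEmpty_or_nonempty (SimpleGraph.induce S G).ConnectedComponent with he | he
  · simp [numComponents, Nat.card_of_isEmpty]
  · haveI : Unique (SimpleGraph.induce S G).ConnectedComponent :=
      ⟨⟨Classical.arbitrary _⟩, fun a => Subsingleton.elim _ _⟩
    exact le_of_eq (Nat.card_unique)

/-- The minimal colouring of the sunflower graph. -/
def scol (n : ℕ) : Option (ZMod n ⊕ ZMod n) → ℕ
  | none => 0
  | some (Sum.inr _) => 0
  | some (Sum.inl i) => if i.val % 2 = 1 then 2 else if n % 2 = 1 ∧ i.val = n - 1 then 3 else 1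

lemma zmod_succ_val {n : ℕ} (hn : 2 ≤ n) (i : ZMod n) :
    (i + 1).val = i.val + 1 ∨ ((i + 1).val = 0 ∧ i.val = n - 1) := by
  haveI : NeZero n := ⟨by omega⟩
  haveI : Fact (1 < n) := ⟨by omega⟩
  have hv : i.val < n := ZMod.val_lt i
  rw [ZMod.val_add, ZMod.val_one]
  rcases Nat.lt_or_ge (i.val + 1) n with h | h
  · left; exact Nat.mod_eq_of_lt h
  · right
    have : i.val + 1 = n := by omega
    rw [this]; simp; omega

lemma scol_inl (n : ℕ) (i : ZMod n) :
    scol n (some (Sum.inl i)) =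
      if i.val % 2 = 1 then 2 else if n % 2 = 1 ∧ i.val = n - 1 then 3 else 1 := rfl

lemma scol_cycle_ne {n : ℕ} (hn : 2 ≤ n) (i : ZMod n) :
    scol n (some (Sum.inl i)) ≠ scol n (some (Sum.inl (i + 1))) := by
  haveI : NeZero n := ⟨by omega⟩
  have hv : i.val < n := ZMod.val_lt i
  have hs := zmod_succ_val hn i
  rw [scol_inl, scol_inl]
  split_ifs <;> omega

-- adjacency constructors
lemma adj_hub {d : ℕ} (i : ZMod (d - 1)) : (sunflowerGraph d).Adj none (some (Sum.inl i)) := by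
  rw [sunflowerGraph, SimpleGraph.fromRel_adj]
  exact ⟨by simp, Or.inl (Or.inl ⟨rfl, i, rfl⟩)⟩

lemma adj_cycle {d : ℕ} (hn : 2 ≤ d - 1) (i : ZMod (d - 1)) :
    (sunflowerGraph d).Adj (some (Sum.inl i)) (some (Sum.inl (i + 1))) := by
  haveI : NeZero (d - 1) := ⟨by omega⟩
  rw [sunflowerGraph, SimpleGraph.fromRel_adj]
  refine ⟨?_, Or.inl (Or.inr (Or.inl ⟨i, rfl, rfl⟩))⟩
  simp only [ne_eq, Option.some.injEq, Sum.inl.injEq]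
  intro h
  have h2 := congrArg ZMod.val h
  have := zmod_succ_val hn i
  have hv : i.val < d - 1 := ZMod.val_lt i
  omega

lemma adj_petal1 {d : ℕ} (i : ZMod (d - 1)) :
    (sunflowerGraph d).Adj (some (Sum.inr i)) (some (Sum.inl i)) := by
  rw [sunflowerGraph, SimpleGraph.fromRel_adj]
  exact ⟨by simp, Or.inl (Or.inr (Or.inr ⟨i, rfl, Or.inl rfl⟩))⟩

lemma adj_petal2 {d : ℕ} (i : ZMod (d - 1)) :
    (sunflowerGraph d).Adj (some (Sum.inr i)) (some (Sum.inl (i + 1))) := by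
  rw [sunflowerGraph, SimpleGraph.fromRel_adj]
  exact ⟨by simp, Or.inl (Or.inr (Or.inr ⟨i, rfl, Or.inr rfl⟩))⟩

/-- validity of the colouring -/
lemma scol_valid {d : ℕ} (hn : 2 ≤ d - 1) :
    ∀ u v, (sunflowerGraph d).Adj u v → scol (d - 1) u ≠ scol (d - 1) v := by
  have key : ∀ u v, (u = none ∧ ∃ i, v = some (Sum.inl i)) ∨
      (∃ i, u = some (Sum.inl i) ∧ v = some (Sum.inl (i + 1))) ∨
      (∃ i : ZMod (d-1), u = some (Sum.inr i) ∧ (v = some (Sum.inl i) ∨ v = some (Sum.inl (i + 1)))) →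
      scol (d - 1) u ≠ scol (d - 1) v := by
    rintro u v (⟨rfl, i, rfl⟩ | ⟨i, rfl, rfl⟩ | ⟨i, rfl, (rfl | rfl)⟩)
    · show (0 : ℕ) ≠ _
      rw [scol_inl]; split_ifs <;> omega
    · exact scol_cycle_ne hn i
    · show (0 : ℕ) ≠ _
      rw [scol_inl]; split_ifs <;> omega
    · show (0 : ℕ) ≠ _
      rw [scol_inl]; split_ifs <;> omega
  intro u v huv
  rw [sunflowerGraph, SimpleGraph.fromRel_adj] at huv
  rcases huv.2 with h | h
  · exact key u v h
  · exact (key v u h).symm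

lemma scol_lt {n : ℕ} (v : Option (ZMod n ⊕ ZMod n)) :
    scol n v < if n % 2 = 1 then 4 else 3 := by
  rcases v with _ | (i | i)
  · show (0:ℕ) < _; split_ifs <;> omega
  · rw [scol_inl]; split_ifs <;> omega
  · show (0:ℕ) < _; split_ifs <;> omega

lemma sunflower_colorable {d : ℕ} (hn : 2 ≤ d - 1) :
    (sunflowerGraph d).Colorable (if (d-1) % 2 = 1 then 4 else 3) :=
  ⟨SimpleGraph.Coloring.mk (fun v => ⟨scol (d-1) v, scol_lt v⟩)
    (fun {u v} h => by simpa [Fin.ext_iff] using scol_valid hn u v h)⟩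

lemma sunflower_not_colorable_two {d : ℕ} (hn : 2 ≤ d - 1) :
    ¬ (sunflowerGraph d).Colorable 2 := by
  haveI : NeZero (d - 1) := ⟨by omega⟩
  haveI : Fact (1 < (d-1)) := ⟨by omega⟩
  rintro ⟨f⟩
  have h01 : (0 : ZMod (d-1)) + 1 = 1 := by ring
  have h1 := f.valid (adj_hub (d := d) 0)
  have h2 := f.valid (adj_hub (d := d) 1)
  have h3 := f.valid (h01 ▸ adj_cycle hn (0 : ZMod (d-1)))
  have b1 := (f none).isLt
  have b2 := (f (some (Sum.inl 0))).isLt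
  have b3 := (f (some (Sum.inl 1))).isLt
  rw [Ne, Fin.ext_iff] at h1 h2 h3
  omega

lemma sunflower_not_colorable_three {d : ℕ} (hn : 2 ≤ d - 1) (hodd : (d - 1) % 2 = 1) :
    ¬ (sunflowerGraph d).Colorable 3 := by
  haveI : NeZero (d - 1) := ⟨by omega⟩
  rintro ⟨f⟩
  set A := f (some (Sum.inl 0)) with hA
  set B := f (some (Sum.inl 1)) with hB
  set H := f none with hH
  have h01 : (0 : ZMod (d-1)) + 1 = 1 := by ring
  have hHA : H ≠ A := f.valid (adj_hub (d := d) 0)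
  have hHB : H ≠ B := f.valid (adj_hub (d := d) 1)
  have hAB : A ≠ B := f.valid (h01 ▸ adj_cycle hn (0 : ZMod (d-1)))
  have claim : ∀ k : ℕ, f (some (Sum.inl (k : ZMod (d-1)))) = if k % 2 = 0 then A else B := by
    intro k
    induction k with
    | zero => simpa using hA.symm
    | succ k ih =>
      have hcast : ((k + 1 : ℕ) : ZMod (d-1)) = (k : ZMod (d-1)) + 1 := by push_cast; ring
      rw [hcast]
      have hadj := f.valid (adj_cycle hn ((k : ℕ) : ZMod (d-1)))
      have hhub := f.valid (adj_hub (d := d) ((k : ZMod (d-1)) + 1))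
      set x := f (some (Sum.inl ((k : ZMod (d-1)) + 1))) with hx
      have bx := x.isLt
      have bA := A.isLt
      have bB := B.isLt
      have bH := H.isLt
      rw [ih] at hadj
      rw [Ne, Fin.ext_iff] at hHA hHB hAB hadj hhub
      rw [Fin.ext_iff]
      split_ifs at hadj ⊢ with p1 p2 p3 <;> omega
  have hfin := claim (d - 1)
  rw [ZMod.natCast_self] at hfin
  rw [hodd] at hfin
  simp only [if_neg (by omega : ¬ (1 = 0))] at hfin
  exact hAB (hA.symm ▸ hfin ▸ rfl)

lemma sunflower_chrom {d : ℕ} (hn : 2 ≤ d - 1) :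
    (sunflowerGraph d).chromaticNumber = ((if (d-1) % 2 = 1 then 4 else 3 : ℕ) : ℕ∞) := by
  apply le_antisymm
  · exact (sunflower_colorable hn).chromaticNumber_le
  · rw [SimpleGraph.chromaticNumber]
    apply le_iInf₂
    intro m hm
    rw [Nat.cast_le]
    by_contra h
    push_neg at h
    split_ifs at h with hp
    · exact sunflower_not_colorable_three hn hp (hm.mono (by omega))
    · exact sunflower_not_colorable_two hn (hm.mono (by omega))

lemma range_scol {n : ℕ} (hn : 2 ≤ n) :
    Set.range (scol n) = if n % 2 = 1 then ({0,1,2,3} : Set ℕ) else ({0,1,2} : Set ℕ) := by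
  haveI : NeZero n := ⟨by omega⟩
  haveI : Fact (1 < n) := ⟨by omega⟩
  have s0 : scol n none = 0 := rfl
  have s1 : scol n (some (Sum.inl 0)) = 1 := by
    rw [scol_inl, ZMod.val_zero]
    simp only [Nat.zero_mod]
    rw [if_neg (by omega), if_neg (by omega)]
  have s2 : scol n (some (Sum.inl 1)) = 2 := by
    rw [scol_inl, ZMod.val_one]
    rw [if_pos (by omega)]
  have s3 : n % 2 = 1 → scol n (some (Sum.inl ((n - 1 : ℕ) : ZMod n))) = 3 := by
    intro hp
    rw [scol_inl, ZMod.val_cast_of_lt (by omega)]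
    rw [if_neg (by omega), if_pos ⟨hp, rfl⟩]
  ext x
  simp only [Set.mem_range]
  constructor
  · rintro ⟨v, rfl⟩
    have hb := scol_lt (n := n) v
    have h3 : n % 2 = 1 ∨ scol n v ≠ 3 := by
      rcases Nat.lt_or_ge (n % 2) 1 with h | h
      · right
        rcases v with _ | (i | i)
        · simp [scol]
        · rw [scol_inl]; split_ifs <;> omega
        · simp [scol]
      · left; omega
    split_ifs at hb ⊢ with hp <;>
      simp only [Set.mem_insert_iff, Set.mem_singleton_iff] <;> omega
  · intro hx
    split_ifs at hx with hp <;>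
      simp only [Set.mem_insert_iff, Set.mem_singleton_iff] at hx
    · rcases hx with rfl | rfl | rfl | rfl
      · exact ⟨none, s0⟩
      · exact ⟨_, s1⟩
      · exact ⟨_, s2⟩
      · exact ⟨_, s3 hp⟩
    · rcases hx with rfl | rfl | rfl
      · exact ⟨none, s0⟩
      · exact ⟨_, s1⟩
      · exact ⟨_, s2⟩

lemma induce_adj' {V : Type*} (G : SimpleGraph V) (S : Set V) {v w : V}
    (hv : v ∈ S) (hw : w ∈ S) (h : G.Adj v w) : (G.induce S).Adj ⟨v, hv⟩ ⟨w, hw⟩ := h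

/-- Connectivity of hub-containing stages. -/
lemma preHub {d : ℕ} (S : Set (Option (ZMod (d-1) ⊕ ZMod (d-1)))) (h0 : none ∈ S)
    (hpetal : ∀ i, some (Sum.inr i) ∈ S →
      (some (Sum.inl i) ∈ S ∨ some (Sum.inl (i+1)) ∈ S)) :
    ((sunflowerGraph d).induce S).Preconnected := by
  have base : ∀ v (hv : v ∈ S),
      ((sunflowerGraph d).induce S).Reachable ⟨none, h0⟩ ⟨v, hv⟩ := by
    rintro (_ | (i | i)) hv
    · exact SimpleGraph.Reachable.refl _
    · exact (induce_adj' _ _ h0 hv (adj_hub i)).reachable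
    · rcases hpetal i hv with h | h
      · exact ((induce_adj' _ _ h0 h (adj_hub i)).reachable).trans
          (induce_adj' _ _ h hv (adj_petal1 i).symm).reachable
      · exact ((induce_adj' _ _ h0 h (adj_hub (i+1))).reachable).trans
          (induce_adj' _ _ h hv (adj_petal2 i).symm).reachable
  rintro ⟨v, hv⟩ ⟨w, hw⟩
  exact (base v hv).symm.trans (base w hw)

/-- Connectivity of the stage `{2,1}`: the outer cycle minus possibly the colour-3 vertex. -/
lemma pre2 {d : ℕ} (hn : 2 ≤ d - 1) :
    ((sunflowerGraph d).induce {v | scol (d-1) v = 2 ∨ scol (d-1) v = 1}).Preconnected := by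
  haveI : NeZero (d - 1) := ⟨by omega⟩
  set S : Set (Option (ZMod (d-1) ⊕ ZMod (d-1))) :=
    {v | scol (d-1) v = 2 ∨ scol (d-1) v = 1} with hS
  -- membership facts
  have hmem : ∀ k : ℕ, k < d - 1 → (k % 2 = 1 ∨ k ≠ d - 1 - 1) →
      some (Sum.inl ((k : ℕ) : ZMod (d-1))) ∈ S := by
    intro k hk hcond
    have hval : ((k : ℕ) : ZMod (d-1)).val = k := ZMod.val_cast_of_lt hk
    simp only [hS, Set.mem_setOf_eq, scol_inl, hval]
    split_ifs with h1 h2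
    · left; rfl
    · omega
    · right; rfl
  have h0 : some (Sum.inl ((0 : ℕ) : ZMod (d-1))) ∈ S := hmem 0 (by omega) (by omega)
  -- reachability along the path
  have key : ∀ k : ℕ, k < d - 1 → (k % 2 = 1 ∨ k ≠ d - 1 - 1) →
      ∀ (h : some (Sum.inl ((k : ℕ) : ZMod (d-1))) ∈ S),
      ((sunflowerGraph d).induce S).Reachable ⟨_, h0⟩ ⟨_, h⟩ := by
    intro k
    induction k with
    | zero => intro _ _ h; exact SimpleGraph.Reachable.refl _
    | succ k ih =>
      intro hk hcond h
      have hkmem : some (Sum.inl ((k : ℕ) : ZMod (d-1))) ∈ S :=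
        hmem k (by omega) (by omega)
      have hcast : ((k + 1 : ℕ) : ZMod (d-1)) = ((k : ℕ) : ZMod (d-1)) + 1 := by
        push_cast; ring
      have hadj : (sunflowerGraph d).Adj (some (Sum.inl ((k : ℕ) : ZMod (d-1))))
          (some (Sum.inl ((k + 1 : ℕ) : ZMod (d-1)))) := by
        rw [hcast]; exact adj_cycle hn _
      exact (ih (by omega) (by omega) hkmem).trans
        (induce_adj' _ _ hkmem h hadj).reachable
  -- every vertex of S is a cycle vertex with the right property
  have repr : ∀ v (hv : v ∈ S),
      ((sunflowerGraph d).induce S).Reachable ⟨_, h0⟩ ⟨v, hv⟩ := by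
    intro v hv
    have hv' := hv
    simp only [hS, Set.mem_setOf_eq] at hv'
    rcases v with _ | (i | i)
    · simp [scol] at hv'
    · have hval : i.val < d - 1 := ZMod.val_lt i
      have hne : i.val % 2 = 1 ∨ i.val ≠ d - 1 - 1 := by
        rw [scol_inl] at hv'
        split_ifs at hv' with h1 h2 <;> omega
      have hcast : ((i.val : ℕ) : ZMod (d-1)) = i := ZMod.natCast_zmod_val i
      have hmm : some (Sum.inl ((i.val : ℕ) : ZMod (d-1))) ∈ S := by rw [hcast]; exact hv
      have := key i.val hval hne hmm
      convert this using 2 <;> rw [hcast]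
    · simp [scol] at hv'
  rintro ⟨v, hv⟩ ⟨w, hw⟩
  exact (repr v hv).symm.trans (repr w hw)

lemma scol_eq_two {n : ℕ} {v : Option (ZMod n ⊕ ZMod n)} (h : scol n v = 2) :
    ∃ i, v = some (Sum.inl i) ∧ i.val % 2 = 1 := by
  rcases v with _ | (i | i)
  · simp [scol] at h
  · rw [scol_inl] at h
    split_ifs at h with h1 h2
    · exact ⟨i, rfl, h1⟩
    · omega
    · omega
  · simp [scol] at h

lemma card_stage1 {d : ℕ} (hn : 2 ≤ d - 1) :
    Nat.card {v : Option (ZMod (d-1) ⊕ ZMod (d-1)) | scol (d-1) v = 2} ≤ (d-1)/2 := by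
  haveI : NeZero (d - 1) := ⟨by omega⟩
  have : ∀ x : {v : Option (ZMod (d-1) ⊕ ZMod (d-1)) | scol (d-1) v = 2},
      (∃ i : ZMod (d-1), x.1 = some (Sum.inl i) ∧ i.val % 2 = 1) := fun x => scol_eq_two x.2
  set aux : Option (ZMod (d-1) ⊕ ZMod (d-1)) → ℕ := fun v =>
    match v with
    | some (Sum.inl i) => i.val / 2
    | _ => 0 with haux
  rw [show (d-1)/2 = Nat.card (Fin ((d-1)/2)) by simp]
  refine Nat.card_le_card_of_injective
    (fun x : {v : Option (ZMod (d-1) ⊕ ZMod (d-1)) | scol (d-1) v = 2} =>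
      (⟨aux x.1, ?_⟩ : Fin ((d-1)/2))) ?_
  · obtain ⟨i, hi, hoi⟩ := this x
    have hval : i.val < d - 1 := ZMod.val_lt i
    rw [hi]
    show i.val / 2 < (d-1)/2
    omega
  · rintro x y hxy
    obtain ⟨i, hi, hoi⟩ := this x
    obtain ⟨j, hj, hoj⟩ := this y
    simp only [Fin.mk.injEq, hi, hj] at hxy
    have hval : i.val < d - 1 := ZMod.val_lt i
    have hval' : j.val < d - 1 := ZMod.val_lt j
    have h2 : i.val / 2 = j.val / 2 := hxy
    have hij : i = j := ZMod.val_injective _ (by omega)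
    exact Subtype.ext (by rw [hi, hj, hij])

theorem sunflower_minimal_colouring_local (d : ℕ) (hd : 3 ≤ d) :
    ∃ c : Option (ZMod (d - 1) ⊕ ZMod (d - 1)) → ℕ,
      (∀ u v, (sunflowerGraph d).Adj u v → c u ≠ c v) ∧
      (((Set.range c).ncard : ℕ∞) = (sunflowerGraph d).chromaticNumber) ∧
      loc (sunflowerGraph d) c ≤ (d - 1) / 2 := by
  have hn : 2 ≤ d - 1 := by omega
  haveI : NeZero (d - 1) := ⟨by omega⟩
  refine ⟨scol (d-1), scol_valid hn, ?_, ?_⟩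
  · rw [sunflower_chrom hn, range_scol hn]
    split_ifs
    · rw [show ({0,1,2,3} : Set ℕ) = (↑({0,1,2,3} : Finset ℕ)) by simp, Set.ncard_coe_finset]
      rfl
    · rw [show ({0,1,2} : Set ℕ) = (↑({0,1,2} : Finset ℕ)) by simp, Set.ncard_coe_finset]
      rfl
  · set e : List ℕ := if (d-1) % 2 = 1 then [2,1,0,3] else [2,1,0] with he
    have hmark : IsMarkingSeq (scol (d-1)) e := by
      constructor
      · rw [he]; split_ifs <;> decide
      · intro x
        have hx : (∃ v, scol (d-1) v = x) ↔
            x ∈ (if (d-1) % 2 = 1 then ({0,1,2,3} : Set ℕ) else {0,1,2}) := by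
          rw [← range_scol hn]; exact Set.mem_range.symm
        rw [hx, he]
        split_ifs <;> simp [Set.mem_insert_iff, Set.mem_singleton_iff] <;> tauto
    refine le_trans (Nat.sInf_le ⟨e, hmark, rfl⟩) ?_
    have hpos : 1 ≤ (d-1)/2 := by omega
    have hb1 : numComponents (sunflowerGraph d) {v | scol (d-1) v = 2} ≤ (d-1)/2 :=
      le_trans (numComponents_le_card _ _) (card_stage1 hn)
    have hb2 : numComponents (sunflowerGraph d)
        {v | scol (d-1) v = 2 ∨ scol (d-1) v = 1} ≤ (d-1)/2 :=
      le_trans (numComponents_le_one _ _ (pre2 hn)) hpos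
    have hb3 : ∀ l : List ℕ, (0:ℕ) ∈ l → (1:ℕ) ∈ l → (2:ℕ) ∈ l →
        numComponents (sunflowerGraph d) {v | scol (d-1) v ∈ l} ≤ (d-1)/2 := by
      intro l m0 m1 m2
      refine le_trans (numComponents_le_one _ _ (preHub _ ?_ ?_)) hpos
      · exact m0
      · intro i _
        by_cases hc : i.val % 2 = 1
        · left; show scol _ _ ∈ l
          rw [scol_inl, if_pos hc]; exact m2
        · by_cases hc2 : (d-1) % 2 = 1 ∧ i.val = d - 1 - 1
          · right; show scol _ _ ∈ l
            have hs := zmod_succ_val hn i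
            have hv : i.val < d-1 := ZMod.val_lt i
            have hv2 : (i+1).val < d-1 := ZMod.val_lt (i+1)
            have h0 : (i+1).val = 0 := by omega
            rw [scol_inl, h0, if_neg (by omega), if_neg (by omega)]; exact m1
          · left; show scol _ _ ∈ l
            rw [scol_inl, if_neg hc, if_neg hc2]; exact m1
    have hb4 : numComponents (sunflowerGraph d)
        {v | scol (d-1) v = 2 ∨ scol (d-1) v = 1 ∨ scol (d-1) v = 0} ≤ (d-1)/2 := by
      rw [show {v | scol (d-1) v = 2 ∨ scol (d-1) v = 1 ∨ scol (d-1) v = 0}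
          = {v | scol (d-1) v ∈ ([2,1,0] : List ℕ)} by ext v; simp]
      exact hb3 [2,1,0] (by simp) (by simp) (by simp)
    have hb5 : numComponents (sunflowerGraph d)
        {v | scol (d-1) v = 2 ∨ scol (d-1) v = 1 ∨ scol (d-1) v = 0 ∨ scol (d-1) v = 3}
        ≤ (d-1)/2 := by
      rw [show {v | scol (d-1) v = 2 ∨ scol (d-1) v = 1 ∨ scol (d-1) v = 0 ∨ scol (d-1) v = 3}
          = {v | scol (d-1) v ∈ ([2,1,0,3] : List ℕ)} by ext v; simp]
      exact hb3 [2,1,0,3] (by simp) (by simp) (by simp)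
    rw [he]
    split_ifs with hp
    · show locSeq (sunflowerGraph d) (scol (d-1)) [2,1,0,3] ≤ (d-1)/2
      simp only [locSeq]
      norm_num [List.range_succ]
      exact ⟨hb1, hb2, hb4, hb5⟩
    · show locSeq (sunflowerGraph d) (scol (d-1)) [2,1,0] ≤ (d-1)/2
      simp only [locSeq]
      norm_num [List.range_succ]
      exact ⟨hb1, hb2, hb4⟩
end
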